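/- Let ω, Λ be positive integers with Λ ≥ 2ω − 1 and let R = Λ + ω − 1, C = Λ. For the base matrix W with nonzero value w = (1/(2α))(1 − sqrt(1 − 4α(1−α)/ω)) on entries (r,c) with c ≤ r ≤ c + ω − 1 and α = 1/2, the expected number of items in any single test of the spatially coupled design with p items is at most (p/C)·ω·(1/2)(1 − sqrt(1 − 1/ω)), and this quantity is at most p/(4C)·(1 + 1/(2ω·sqrt(1 − 1/ω))) for ω ≥ 2. -/

import Mathlib

/-! Each test meets at most `ω` column blocks, since the admissible `c` lie in `[r + 1 - ω, r]`;
this gives the first bound. For the second, write `s = √(1 - 1/ω)`; using `ω (1 - s²) = 1`, the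
right side minus the left side is `ω (1 - s)² (1 + s²) / (8s) ≥ 0`. -/

open Finset

-- For `ω = 0`, truncated subtraction would let `c = r = 0` into the window.
theorem card_filter_window_le (s : Finset ℕ) (r : ℕ) {ω : ℕ} (hω : 1 ≤ ω) :
    #{c ∈ s | c ≤ r ∧ r ≤ c + ω - 1} ≤ ω := by
  calc #{c ∈ s | c ≤ r ∧ r ≤ c + ω - 1}
      ≤ #(Icc (r + 1 - ω) r) := card_le_card fun c hc => by
        simp only [mem_filter, mem_Icc] at hc ⊢
        omega
    _ ≤ ω := by rw [Nat.card_Icc]; omega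

theorem sum_ite_window_le (s : Finset ℕ) (r : ℕ) {ω : ℕ} (hω : 1 ≤ ω) {K : ℝ} (hK : 0 ≤ K) :
    ∑ c ∈ s, (if c ≤ r ∧ r ≤ c + ω - 1 then K else 0) ≤ ω * K := by
  rw [← sum_filter, sum_const, nsmul_eq_mul]
  gcongr
  exact_mod_cast card_filter_window_le s r hω

theorem mul_half_one_sub_sqrt_one_sub_inv_le {x : ℝ} (hx : 1 < x) :
    x * ((1 / 2) * (1 - √(1 - 1 / x))) ≤ (1 / 4) * (1 + 1 / (2 * x * √(1 - 1 / x))) := by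
  have hx0 : 0 < x := by linarith
  set s := √(1 - 1 / x)
  have hs : 0 < s := Real.sqrt_pos.mpr (by rw [sub_pos, div_lt_one hx0]; exact hx)
  have hsx : x * (1 - s ^ 2) = 1 := by
    rw [Real.sq_sqrt (by rw [sub_nonneg, div_le_one hx0]; exact hx.le)]
    field_simp
    ring
  rw [← sub_nonneg]
  have gap : (1 / 4) * (1 + 1 / (2 * x * s)) - x * ((1 / 2) * (1 - s))
      = x * (1 - s) ^ 2 * (1 + s ^ 2) / (8 * s) := by
    field_simp
    linear_combination 8 * ((s ^ 2 - 2 * s - 1) * x - 1) * hsx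
  rw [gap]
  positivity

theorem stmt_18_general (ω Λ p : ℕ) (hω : 1 ≤ ω)
    (r : ℕ) :
    (∑ c ∈ Finset.Icc 1 Λ,
        (if c ≤ r ∧ r ≤ c + ω - 1 then
          ((p:ℝ)/Λ) * ((1/2) * (1 - Real.sqrt (1 - 1/ω))) else 0))
      ≤ ((p:ℝ)/Λ) * ω * ((1/2) * (1 - Real.sqrt (1 - 1/ω))) ∧
    (2 ≤ ω →
      ((p:ℝ)/Λ) * ω * ((1/2) * (1 - Real.sqrt (1 - 1/ω)))
        ≤ (p:ℝ)/(4*Λ) * (1 + 1/(2*ω*Real.sqrt (1 - 1/ω)))) := by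
  have hprob : 0 ≤ (1 / 2 : ℝ) * (1 - √(1 - 1 / ω)) := by
    have : √(1 - 1 / (ω : ℝ)) ≤ 1 := Real.sqrt_le_one.mpr (sub_le_self _ (by positivity))
    linarith
  refine ⟨?_, fun hω2 => ?_⟩
  · calc _ ≤ ω * ((p:ℝ)/Λ * ((1/2) * (1 - √(1 - 1/ω)))) :=
          sum_ite_window_le _ r hω (mul_nonneg (by positivity) hprob)
      _ = _ := by ring
  · have hω1 : (1 : ℝ) < ω := by exact_mod_cast hω2
    calc ((p:ℝ)/Λ) * ω * ((1/2) * (1 - √(1 - 1/ω)))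
        = (p:ℝ)/Λ * (ω * ((1/2) * (1 - √(1 - 1/ω)))) := by ring
      _ ≤ (p:ℝ)/Λ * ((1/4) * (1 + 1/(2*ω*√(1 - 1/ω)))) :=
          mul_le_mul_of_nonneg_left (mul_half_one_sub_sqrt_one_sub_inv_le hω1) (by positivity)
      _ = _ := by ring

/-- Expected number of items per test in the spatially coupled design with `α = 1/2`:
each test includes items from at most `ω` adjacent column blocks of size `p/C` (with
`C = Λ`), each item with probability `(1/2)(1 - √(1-1/ω))`, so the expected count is at
most `(p/C)·ω·(1/2)(1-√(1-1/ω))`, which for `ω ≥ 2` is at most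
`p/(4C)·(1 + 1/(2ω√(1-1/ω)))`. -/
theorem stmt_18 (ω Λ p : ℕ) (hω : 1 ≤ ω) (hΛ : 2*ω - 1 ≤ Λ)
    (r : ℕ) (hr : r ∈ Finset.Icc 1 (Λ + ω - 1)) :
    (∑ c ∈ Finset.Icc 1 Λ,
        (if c ≤ r ∧ r ≤ c + ω - 1 then
          ((p:ℝ)/Λ) * ((1/2) * (1 - Real.sqrt (1 - 1/ω))) else 0))
      ≤ ((p:ℝ)/Λ) * ω * ((1/2) * (1 - Real.sqrt (1 - 1/ω))) ∧
    (2 ≤ ω →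
      ((p:ℝ)/Λ) * ω * ((1/2) * (1 - Real.sqrt (1 - 1/ω)))
        ≤ (p:ℝ)/(4*Λ) * (1 + 1/(2*ω*Real.sqrt (1 - 1/ω)))) :=
  stmt_18_general ω Λ p hω r
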